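/- Let τ : ℝ² → 𝕊 be continuously differentiable and let σ ∈ X_T have the same degrees of freedom as τ, that is: (i) ∫₀¹ (n_iᵀ σ(γ_i(s)) n_i)·q(s) ds = ∫₀¹ (n_iᵀ τ(γ_i(s)) n_i)·q(s) ds for every affine q : ℝ → ℝ and every i ∈ {1,2,3}; (ii) ∫_T σ(x) dx = ∫_T τ(x) dx (entrywise Lebesgue integrals over the triangle T); and (iii) ∫_T (div σ)(x)·v(x) dx = ∫_T (div τ)(x)·v(x) dx for every affine v : ℝ² → ℝ². Then σ conserves the linear moments of the normal traces on the boundary: for every affine map v : ℝ² → ℝ², Σ_{i=1}^{3} ∫_{e_i} (σ n_i)·v ds = Σ_{i=1}^{3} ∫_{e_i} (τ n_i)·v ds. -/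

import Mathlib

/-
Since `(σ n)·v = (vᵀσ)·n`, Green's formula on `T` for the vector field `vᵀσ` turns the boundary
moment `∑ᵢ ∫_{eᵢ} (σ nᵢ)·v` into `∫_T div σ · v + ∫_T σ : ∇v`. For affine `v` the gradient `∇v` is
constant, so both terms are fixed by the interior degrees of freedom, which `σ` and `τ` share.
Green's formula itself is pulled back to the reference triangle, where it is the fundamental
theorem of calculus along the two coordinate directions.
-/

open MeasureTheory Matrix

noncomputable section

/-- `γ_i(s) = (1-s)·x_{i+1} + s·x_{i+2}`, parametrization of edge `e_i`. -/
def edgePt (x : Fin 3 → Fin 2 → ℝ) (i : Fin 3) (s : ℝ) : Fin 2 → ℝ :=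
  (1 - s) • x (i + 1) + s • x (i + 2)

/-- `n i` is the outward unit normal on the edge `e_i = [x_{i+1}, x_{i+2}]`. -/
def IsOuterNormal (x n : Fin 3 → Fin 2 → ℝ) : Prop :=
  ∀ i : Fin 3, n i ⬝ᵥ n i = 1 ∧ n i ⬝ᵥ (x (i + 2) - x (i + 1)) = 0 ∧
    0 < n i ⬝ᵥ (x (i + 1) - x i)

/-- A real-valued function on the plane given by a polynomial of total degree at most 2. -/
def IsPolyDeg2 (f : (Fin 2 → ℝ) → ℝ) : Prop :=
  ∃ p : MvPolynomial (Fin 2) ℝ, p.totalDegree ≤ 2 ∧ ∀ y, f y = MvPolynomial.eval y p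

/-- Membership in the local space `X_T`. -/
def MemXT (x n : Fin 3 → Fin 2 → ℝ)
    (τ : (Fin 2 → ℝ) → Matrix (Fin 2) (Fin 2) ℝ) : Prop :=
  (∀ y, (τ y)ᵀ = τ y) ∧
  (∀ k l : Fin 2, IsPolyDeg2 fun y => τ y k l) ∧
  (∀ i : Fin 3, ∃ a b : ℝ, ∀ s : ℝ,
    n i ⬝ᵥ (τ (edgePt x i s)).mulVec (n i) = a * s + b)

/-- Row-wise divergence of a matrix field: `(div τ)_k = ∂₁ τ_{k1} + ∂₂ τ_{k2}`. -/
def matDiv (τ : (Fin 2 → ℝ) → Matrix (Fin 2) (Fin 2) ℝ) (y : Fin 2 → ℝ) : Fin 2 → ℝ :=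
  fun k => ∑ j : Fin 2, fderiv ℝ (fun z => τ z k j) y (Pi.single j 1)

/-- The closed triangle `T = conv{x 0, x 1, x 2}`. -/
def Tset (x : Fin 3 → Fin 2 → ℝ) : Set (Fin 2 → ℝ) :=
  convexHull ℝ {x 0, x 1, x 2}

/-- Euclidean length of a vector in `ℝ²` (used for edge lengths). -/
def enorm2 (v : Fin 2 → ℝ) : ℝ := Real.sqrt (v ⬝ᵥ v)

namespace TriangleGreen

def cross (a b : Fin 2 → ℝ) : ℝ := a 0 * b 1 - a 1 * b 0

section UnitNormal

variable {n t : Fin 2 → ℝ}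

lemma cross_eq_cross_mul_dotProduct (hn : n ⬝ᵥ n = 1) (ht : n ⬝ᵥ t = 0) (v : Fin 2 → ℝ) :
    cross v t = cross n t * (n ⬝ᵥ v) := by
  simp only [cross, dotProduct, Fin.sum_univ_two] at *
  linear_combination (v 0 * n 1 - v 1 * n 0) * ht - (v 0 * t 1 - v 1 * t 0) * hn

lemma enorm2_eq_abs_cross (hn : n ⬝ᵥ n = 1) (ht : n ⬝ᵥ t = 0) : enorm2 t = |cross n t| := by
  rw [enorm2, ← Real.sqrt_sq_eq_abs]
  congr 1
  simp only [cross, dotProduct, Fin.sum_univ_two] at *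
  linear_combination (n 0 * t 0 + n 1 * t 1) * ht - (t 0 * t 0 + t 1 * t 1) * hn

/-- In the plane `|t| • n` is `t` turned by a right angle, the direction being fixed by the sign
of `cross w t`; the identity is multiplied through by `cross w t` to avoid a sign function. -/
lemma enorm2_mul_dotProduct_mul_cross (hn : n ⬝ᵥ n = 1) (ht : n ⬝ᵥ t = 0)
    {w : Fin 2 → ℝ} (hw : 0 ≤ n ⬝ᵥ w) (c : Fin 2 → ℝ) :
    enorm2 t * (n ⬝ᵥ c) * cross w t = |cross w t| * cross c t := by
  rw [enorm2_eq_abs_cross hn ht, cross_eq_cross_mul_dotProduct hn ht w,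
    cross_eq_cross_mul_dotProduct hn ht c, abs_mul, abs_of_nonneg hw]
  ring

end UnitNormal

def triangleDet (x : Fin 3 → Fin 2 → ℝ) : ℝ := cross (x 1 - x 0) (x 2 - x 0)

lemma cross_edge_eq_triangleDet (x : Fin 3 → Fin 2 → ℝ) (i : Fin 3) :
    cross (x (i + 1) - x i) (x (i + 2) - x (i + 1)) = triangleDet x := by
  fin_cases i <;> simp [cross, triangleDet] <;> ring

lemma triangleDet_ne_zero {x n : Fin 3 → Fin 2 → ℝ} (hn : IsOuterNormal x n) :
    triangleDet x ≠ 0 := by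
  -- A flat triangle would force the edge `x (2 + 2) - x (2 + 1) = x 1 - x 0` to vanish, which
  -- contradicts `0 < n 0 ⬝ᵥ (x 1 - x 0)`.
  intro hD
  obtain ⟨hn2, ht2, hw2⟩ := hn 2
  have hc : cross (n 2) (x (2 + 2) - x (2 + 1)) = 0 := by
    have := cross_eq_cross_mul_dotProduct hn2 ht2 (x (2 + 1) - x 2)
    rw [cross_edge_eq_triangleDet, hD] at this
    exact (mul_eq_zero.mp this.symm).resolve_right hw2.ne'
  have hx : x (2 + 2) - x (2 + 1) = 0 := by
    have h0 : enorm2 (x (2 + 2) - x (2 + 1)) = 0 := by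
      rw [enorm2_eq_abs_cross hn2 ht2, hc, abs_zero]
    rw [enorm2, Real.sqrt_eq_zero'] at h0
    exact dotProduct_self_eq_zero.mp
      (h0.antisymm (Fintype.sum_nonneg fun _ => mul_self_nonneg _))
  have hw0 := (hn 0).2.2
  rw [show x (0 + 1) - x 0 = x (2 + 2) - x (2 + 1) from rfl, hx, dotProduct_zero] at hw0
  exact hw0.false

def refTriangle : Set (ℝ × ℝ) := {p | 0 ≤ p.1 ∧ 0 ≤ p.2 ∧ p.1 + p.2 ≤ 1}

lemma convexHull_refTriangle :
    convexHull ℝ {((0 : ℝ), (0 : ℝ)), (1, 0), (0, 1)} = refTriangle := by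
  refine (convexHull_min ?_ ?_).antisymm fun p ⟨h1, h2, h3⟩ => ?_
  · rintro p (rfl | rfl | rfl) <;> norm_num [refTriangle]
  · rintro p ⟨p1, p2, p3⟩ q ⟨q1, q2, q3⟩ a b ha hb hab
    refine ⟨?_, ?_, ?_⟩ <;> simp only [Prod.fst_add, Prod.snd_add, Prod.smul_fst, Prod.smul_snd,
      smul_eq_mul] <;> nlinarith
  · have hp :
        p = ∑ i, ![1 - p.1 - p.2, p.1, p.2] i • ![((0 : ℝ), (0 : ℝ)), (1, 0), (0, 1)] i := by
      ext <;> simp [Fin.sum_univ_three]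
    rw [hp]
    refine (convex_convexHull ℝ _).sum_mem (fun i _ => ?_) (by simp [Fin.sum_univ_three]; ring)
      (fun i _ => subset_convexHull ℝ _ ?_)
    · fin_cases i <;> simp <;> linarith
    · fin_cases i <;> simp

lemma isCompact_refTriangle : IsCompact refTriangle := by
  rw [← convexHull_refTriangle]
  exact (Set.toFinite _).isCompact_convexHull (𝕜 := ℝ)

lemma measurableSet_refTriangle : MeasurableSet refTriangle :=
  isCompact_refTriangle.isClosed.measurableSet

lemma integral_refTriangle_eq_iterated {F : ℝ × ℝ → ℝ} (hF : IntegrableOn F refTriangle) :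
    ∫ p in refTriangle, F p = ∫ s in (0 : ℝ)..1, ∫ t in (0 : ℝ)..(1 - s), F (s, t) := by
  have hslice : ∀ s, ∫ t, refTriangle.indicator F (s, t) =
      (Set.Icc 0 1).indicator (fun s => ∫ t in (0 : ℝ)..(1 - s), F (s, t)) s := by
    intro s
    simp_rw [← Set.indicator_comp_right (fun t => (s, t))]
    by_cases hs : s ∈ Set.Icc (0 : ℝ) 1
    · have hpre : (fun t => (s, t)) ⁻¹' refTriangle = Set.Icc 0 (1 - s) := by
        ext t
        simp only [refTriangle, Set.mem_preimage, Set.mem_ofPred_eq, Set.mem_Icc]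
        constructor
        · rintro ⟨-, ht0, ht1⟩; exact ⟨ht0, by linarith⟩
        · rintro ⟨ht0, ht1⟩; exact ⟨hs.1, ht0, by linarith⟩
      rw [hpre, Set.indicator_of_mem hs, integral_indicator measurableSet_Icc,
        integral_Icc_eq_integral_Ioc, ← intervalIntegral.integral_of_le (by linarith [hs.2])]
      rfl
    · have hpre : (fun t => (s, t)) ⁻¹' refTriangle = ∅ := by
        ext t
        simp only [refTriangle, Set.mem_preimage, Set.mem_ofPred_eq, Set.mem_empty_iff_false,
          iff_false]
        rintro ⟨hs0, ht0, hst⟩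
        exact hs ⟨hs0, by linarith⟩
      rw [hpre, Set.indicator_of_notMem hs, Set.indicator_empty, integral_zero]
  rw [← integral_indicator measurableSet_refTriangle, Measure.volume_eq_prod,
    integral_prod _ (by
      rwa [← Measure.volume_eq_prod, integrable_indicator_iff measurableSet_refTriangle])]
  simp_rw [hslice]
  rw [integral_indicator measurableSet_Icc, integral_Icc_eq_integral_Ioc,
    ← intervalIntegral.integral_of_le zero_le_one]

lemma integral_refTriangle_of_hasDerivAt_snd {g F : ℝ × ℝ → ℝ} (hg : Continuous g)
    (hF : Continuous F) (hd : ∀ p : ℝ × ℝ, HasDerivAt (fun t => g (p.1, t)) (F p) p.2) :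
    ∫ p in refTriangle, F p =
      (∫ s in (0 : ℝ)..1, g (s, 1 - s)) - ∫ s in (0 : ℝ)..1, g (s, 0) := by
  rw [integral_refTriangle_eq_iterated (hF.continuousOn.integrableOn_compact isCompact_refTriangle),
    ← intervalIntegral.integral_sub
      ((by fun_prop : Continuous fun s => g (s, 1 - s)).intervalIntegrable _ _)
      ((by fun_prop : Continuous fun s => g (s, 0)).intervalIntegrable _ _)]
  refine intervalIntegral.integral_congr fun s _ => ?_
  exact intervalIntegral.integral_eq_sub_of_hasDerivAt (f := fun t => g (s, t))
    (fun t _ => hd (s, t)) ((by fun_prop : Continuous fun t => F (s, t)).intervalIntegrable _ _)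

lemma integral_refTriangle_comp_swap (F : ℝ × ℝ → ℝ) :
    ∫ p in refTriangle, F p.swap = ∫ p in refTriangle, F p := by
  have hswap : Prod.swap ⁻¹' refTriangle = refTriangle := by
    ext p
    simp only [refTriangle, Set.mem_preimage, Prod.fst_swap, Prod.snd_swap, Set.mem_ofPred_eq]
    constructor <;> rintro ⟨h1, h2, h3⟩ <;> exact ⟨h2, h1, by linarith⟩
  have := (Measure.measurePreserving_swap (μ := (volume : Measure ℝ)) (ν := volume))
    |>.setIntegral_preimage_emb MeasurableEquiv.prodComm.measurableEmbedding F refTriangle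
  rwa [hswap, ← Measure.volume_eq_prod] at this

lemma integral_refTriangle_of_hasDerivAt_fst {g F : ℝ × ℝ → ℝ} (hg : Continuous g)
    (hF : Continuous F) (hd : ∀ p : ℝ × ℝ, HasDerivAt (fun s => g (s, p.2)) (F p) p.1) :
    ∫ p in refTriangle, F p =
      (∫ t in (0 : ℝ)..1, g (1 - t, t)) - ∫ t in (0 : ℝ)..1, g (0, t) := by
  rw [← integral_refTriangle_comp_swap]
  exact integral_refTriangle_of_hasDerivAt_snd (g := g ∘ Prod.swap) (by fun_prop) (by fun_prop)
    fun p => hd p.swap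

def refMap (x : Fin 3 → Fin 2 → ℝ) (p : ℝ × ℝ) : Fin 2 → ℝ :=
  x 0 + p.1 • (x 1 - x 0) + p.2 • (x 2 - x 0)

lemma image_refMap_refTriangle (x : Fin 3 → Fin 2 → ℝ) : refMap x '' refTriangle = Tset x := by
  let Φ : (ℝ × ℝ) →ᵃ[ℝ] (Fin 2 → ℝ) :=
    ((LinearMap.fst ℝ ℝ ℝ).smulRight (x 1 - x 0) +
      (LinearMap.snd ℝ ℝ ℝ).smulRight (x 2 - x 0)).toAffineMap + AffineMap.const ℝ _ (x 0)
  have hΦ : ⇑Φ = refMap x := by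
    funext p
    simp [Φ, refMap]
    abel
  rw [← hΦ, ← convexHull_refTriangle, AffineMap.image_convexHull, Tset]
  simp [Set.image_insert_eq, hΦ, refMap]

lemma integral_Tset_eq_abs_triangleDet_mul {x : Fin 3 → Fin 2 → ℝ} (hD : triangleDet x ≠ 0)
    (h : (Fin 2 → ℝ) → ℝ) :
    ∫ y in Tset x, h y = |triangleDet x| * ∫ p in refTriangle, h (refMap x p) := by
  let e : (Fin 2 → ℝ) ≃ᵐ ℝ × ℝ := MeasurableEquiv.finTwoArrow
  let M : Matrix (Fin 2) (Fin 2) ℝ := (Matrix.of ![x 1 - x 0, x 2 - x 0])ᵀ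
  let L := (Matrix.toLin' M).toContinuousLinearMap
  have hL : ∀ z, x 0 + L z = refMap x (e z) := by
    intro z
    ext i
    fin_cases i <;> simp [L, M, e, refMap] <;> ring
  have hdetM : M.det = triangleDet x := by
    simp [M, Matrix.det_fin_two, triangleDet, cross]
  have hinj : Function.Injective L :=
    Matrix.mulVec_injective_iff_isUnit.mpr (M.isUnit_iff_isUnit_det.mpr (hdetM ▸ hD.isUnit))
  have hcv := integral_image_eq_integral_abs_det_fderiv_smul volume
    (measurableSet_refTriangle.preimage e.measurable)
    (fun z _ => (L.hasFDerivAt.const_add (x 0)).hasFDerivWithinAt)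
    ((add_right_injective (x 0)).comp hinj).injOn h
  have himage : (fun z => x 0 + L z) '' (e ⁻¹' refTriangle) = Tset x := by
    simp_rw [hL]
    rw [show (fun z => refMap x (e z)) = refMap x ∘ e from rfl, Set.image_comp,
      e.image_preimage, image_refMap_refTriangle]
  have hdet : L.det = triangleDet x := by
    rw [ContinuousLinearMap.det, LinearMap.coe_toContinuousLinearMap, LinearMap.det_toLin',
      hdetM]
  rw [himage] at hcv
  simp_rw [hcv, hL, hdet, smul_eq_mul]
  rw [integral_const_mul]
  congr 1
  exact (volume_preserving_finTwoArrow ℝ).setIntegral_preimage_emb e.measurableEmbedding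
    (fun p => h (refMap x p)) refTriangle

@[fun_prop]
lemma continuous_refMap (x : Fin 3 → Fin 2 → ℝ) : Continuous (refMap x) := by
  unfold refMap
  fun_prop

section FundamentalTheorem

variable {x : Fin 3 → Fin 2 → ℝ} {f : (Fin 2 → ℝ) → ℝ}

lemma integral_refTriangle_fderiv_fst (hf : ContDiff ℝ 1 f) :
    ∫ p in refTriangle, fderiv ℝ f (refMap x p) (x 1 - x 0) =
      (∫ s in (0 : ℝ)..1, f (edgePt x 0 s)) - ∫ s in (0 : ℝ)..1, f (edgePt x 1 s) := by
  have hderiv : ∀ p : ℝ × ℝ, HasDerivAt (fun s => f (refMap x (s, p.2)))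
      (fderiv ℝ f (refMap x p) (x 1 - x 0)) p.1 := by
    intro p
    refine (hf.differentiable one_ne_zero _).hasFDerivAt.comp_hasDerivAt p.1 ?_
    simpa [refMap] using ((hasDerivAt_id p.1).smul_const (x 1 - x 0)).const_add (x 0)
      |>.add_const (p.2 • (x 2 - x 0))
  have := hf.continuous
  have := hf.continuous_fderiv one_ne_zero
  rw [integral_refTriangle_of_hasDerivAt_fst (g := fun p => f (refMap x p)) (by fun_prop)
    (by fun_prop) hderiv]
  have hedge0 : ∀ t, refMap x (1 - t, t) = edgePt x 0 t := fun t => by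
    simp [refMap, edgePt]; module
  have hedge1 : ∀ t, refMap x (0, t) = edgePt x 1 (1 - t) := fun t => by
    simp [refMap, edgePt]; module
  simp_rw [hedge0, hedge1,
    intervalIntegral.integral_comp_sub_left (fun s => f (edgePt x 1 s))]
  norm_num

lemma integral_refTriangle_fderiv_snd (hf : ContDiff ℝ 1 f) :
    ∫ p in refTriangle, fderiv ℝ f (refMap x p) (x 2 - x 0) =
      (∫ s in (0 : ℝ)..1, f (edgePt x 0 s)) - ∫ s in (0 : ℝ)..1, f (edgePt x 2 s) := by
  have hderiv : ∀ p : ℝ × ℝ, HasDerivAt (fun t => f (refMap x (p.1, t)))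
      (fderiv ℝ f (refMap x p) (x 2 - x 0)) p.2 := by
    intro p
    refine (hf.differentiable one_ne_zero _).hasFDerivAt.comp_hasDerivAt p.2 ?_
    simpa [refMap] using ((hasDerivAt_id p.2).smul_const (x 2 - x 0)).const_add
      (x 0 + p.1 • (x 1 - x 0))
  have := hf.continuous
  have := hf.continuous_fderiv one_ne_zero
  rw [integral_refTriangle_of_hasDerivAt_snd (g := fun p => f (refMap x p)) (by fun_prop)
    (by fun_prop) hderiv]
  have hedge0 : ∀ s, refMap x (s, 1 - s) = edgePt x 0 (1 - s) := fun s => by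
    simp [refMap, edgePt]; module
  have hedge2 : ∀ s, refMap x (s, 0) = edgePt x 2 s := fun s => by
    simp [refMap, edgePt]; module
  simp_rw [hedge0, hedge2,
    intervalIntegral.integral_comp_sub_left (fun s => f (edgePt x 0 s))]
  norm_num

end FundamentalTheorem

theorem integral_fderiv_apply_Tset {x n : Fin 3 → Fin 2 → ℝ} (hn : IsOuterNormal x n)
    {f : (Fin 2 → ℝ) → ℝ} (hf : ContDiff ℝ 1 f) (c : Fin 2 → ℝ) :
    ∫ y in Tset x, fderiv ℝ f y c =
      ∑ i, enorm2 (x (i + 2) - x (i + 1)) * (n i ⬝ᵥ c) *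
        ∫ s in (0 : ℝ)..1, f (edgePt x i s) := by
  have hD := triangleDet_ne_zero hn
  have hcramer : triangleDet x • c =
      cross c (x 2 - x 0) • (x 1 - x 0) + cross (x 1 - x 0) c • (x 2 - x 0) := by
    ext i; fin_cases i <;> simp [cross, triangleDet] <;> ring
  have hint : ∀ v, IntegrableOn (fun p => fderiv ℝ f (refMap x p) v) refTriangle := fun v => by
    have := hf.continuous_fderiv one_ne_zero
    exact (by fun_prop : Continuous _).continuousOn.integrableOn_compact isCompact_refTriangle
  have hinterior : triangleDet x * ∫ p in refTriangle, fderiv ℝ f (refMap x p) c =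
      cross c (x 2 - x 0) *
          ((∫ s in (0 : ℝ)..1, f (edgePt x 0 s)) - ∫ s in (0 : ℝ)..1, f (edgePt x 1 s)) +
        cross (x 1 - x 0) c *
          ((∫ s in (0 : ℝ)..1, f (edgePt x 0 s)) - ∫ s in (0 : ℝ)..1, f (edgePt x 2 s)) := by
    rw [← integral_refTriangle_fderiv_fst hf, ← integral_refTriangle_fderiv_snd hf,
      ← integral_const_mul, ← integral_const_mul, ← integral_const_mul,
      ← integral_add ((hint _).const_mul _) ((hint _).const_mul _)]
    congr with p
    rw [← smul_eq_mul (triangleDet x), ← map_smul, hcramer, map_add, map_smul, map_smul,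
      smul_eq_mul, smul_eq_mul]
  have hboundary : ∀ i (I : ℝ),
      triangleDet x * (enorm2 (x (i + 2) - x (i + 1)) * (n i ⬝ᵥ c) * I) =
        |triangleDet x| * cross c (x (i + 2) - x (i + 1)) * I := fun i I => by
    obtain ⟨hunit, horth, hout⟩ := hn i
    rw [← mul_assoc, ← cross_edge_eq_triangleDet x i, mul_comm (cross _ _),
      enorm2_mul_dotProduct_mul_cross hunit horth hout.le]
  apply mul_left_cancel₀ hD
  rw [integral_Tset_eq_abs_triangleDet_mul hD, mul_left_comm, hinterior, Finset.mul_sum]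
  simp_rw [hboundary]
  simp [Fin.sum_univ_three, cross, triangleDet]
  ring

lemma isCompact_Tset (x : Fin 3 → Fin 2 → ℝ) : IsCompact (Tset x) :=
  (Set.toFinite _).isCompact_convexHull (𝕜 := ℝ)

def divergence (u : (Fin 2 → ℝ) → Fin 2 → ℝ) (y : Fin 2 → ℝ) : ℝ :=
  ∑ k, fderiv ℝ (fun z => u z k) y (Pi.single k 1)

theorem integral_divergence_Tset {x n : Fin 3 → Fin 2 → ℝ} (hn : IsOuterNormal x n)
    {u : (Fin 2 → ℝ) → Fin 2 → ℝ} (hu : ∀ k, ContDiff ℝ 1 fun y => u y k) :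
    ∫ y in Tset x, divergence u y =
      ∑ i, enorm2 (x (i + 2) - x (i + 1)) * ∫ s in (0 : ℝ)..1, u (edgePt x i s) ⬝ᵥ n i := by
  have hint : ∀ k,
      IntegrableOn (fun y => fderiv ℝ (fun z => u z k) y (Pi.single k 1)) (Tset x) := fun k => by
      have := (hu k).continuous_fderiv one_ne_zero
      exact (by fun_prop : Continuous _).continuousOn.integrableOn_compact (isCompact_Tset x)
  have hedge : ∀ i k, IntervalIntegrable (fun s => u (edgePt x i s) k * n i k) volume 0 1 :=
    fun i k => by
      have := (hu k).continuous
      exact (by unfold edgePt; fun_prop : Continuous _).intervalIntegrable _ _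
  simp_rw [divergence, integral_finsetSum _ fun k _ => hint k,
    integral_fderiv_apply_Tset hn (hu _), dotProduct_single, mul_one, dotProduct,
    intervalIntegral.integral_finsetSum fun k _ => hedge _ k, intervalIntegral.integral_mul_const,
    Finset.mul_sum]
  rw [Finset.sum_comm]
  exact Finset.sum_congr rfl fun i _ => Finset.sum_congr rfl fun k _ => by ring

lemma divergence_vecMul {ρ : (Fin 2 → ℝ) → Matrix (Fin 2) (Fin 2) ℝ}
    {v : (Fin 2 → ℝ) → Fin 2 → ℝ}
    (hρ : ∀ k l, Differentiable ℝ fun y => ρ y k l) (hv : ∀ k, Differentiable ℝ fun y => v y k)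
    (y : Fin 2 → ℝ) :
    divergence (fun z => v z ᵥ* ρ z) y =
      matDiv ρ y ⬝ᵥ v y + ∑ k, ∑ l, ρ y k l * fderiv ℝ (fun z => v z k) y (Pi.single l 1) := by
  have hder : ∀ l, fderiv ℝ (fun z => (v z ᵥ* ρ z) l) y =
      ∑ k, (v y k • fderiv ℝ (fun z => ρ z k l) y + ρ y k l • fderiv ℝ (fun z => v z k) y) :=
    fun l => show fderiv ℝ (fun z => ∑ k, v z k * ρ z k l) y = _ from
      (HasFDerivAt.fun_sum fun k _ => (hv k y).hasFDerivAt.fun_mul (hρ k l y).hasFDerivAt).fderiv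
  simp only [divergence, hder, _root_.sum_apply, _root_.add_apply, _root_.smul_apply, smul_eq_mul,
    Finset.sum_add_distrib, matDiv, dotProduct, Finset.sum_mul]
  rw [Finset.sum_comm]
  congr 1
  · exact Finset.sum_congr rfl fun _ _ => Finset.sum_congr rfl fun _ _ => mul_comm _ _
  · exact Finset.sum_comm

lemma continuous_matDiv {ρ : (Fin 2 → ℝ) → Matrix (Fin 2) (Fin 2) ℝ}
    (hρ : ∀ k l, ContDiff ℝ 1 fun y => ρ y k l) : Continuous (matDiv ρ) := by
  have := fun k l => (hρ k l).continuous_fderiv one_ne_zero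
  unfold matDiv
  fun_prop

section MatrixField

variable {x n : Fin 3 → Fin 2 → ℝ} {ρ : (Fin 2 → ℝ) → Matrix (Fin 2) (Fin 2) ℝ}

theorem sum_edge_integral_mulVec_dotProduct (hn : IsOuterNormal x n)
    (hρ : ∀ k l, ContDiff ℝ 1 fun y => ρ y k l) {v : (Fin 2 → ℝ) → Fin 2 → ℝ}
    (hv : ∀ k, ContDiff ℝ 1 fun y => v y k) :
    ∑ i, enorm2 (x (i + 2) - x (i + 1)) *
        ∫ s in (0 : ℝ)..1, ρ (edgePt x i s) *ᵥ n i ⬝ᵥ v (edgePt x i s) =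
      ∫ y in Tset x, (matDiv ρ y ⬝ᵥ v y +
        ∑ k, ∑ l, ρ y k l * fderiv ℝ (fun z => v z k) y (Pi.single l 1)) := by
  have hu : ∀ l, ContDiff ℝ 1 fun y => (v y ᵥ* ρ y) l := fun l => by
    simp only [vecMul, dotProduct]
    exact ContDiff.sum fun k _ => (hv k).mul (hρ k l)
  simp_rw [dotProduct_comm (ρ _ *ᵥ n _), dotProduct_mulVec]
  rw [← integral_divergence_Tset hn hu]
  simp_rw [divergence_vecMul (fun k l => (hρ k l).differentiable one_ne_zero)
    (fun k => (hv k).differentiable one_ne_zero)]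

theorem sum_edge_integral_mulVec_dotProduct_affine (hn : IsOuterNormal x n)
    (hρ : ∀ k l, ContDiff ℝ 1 fun y => ρ y k l) (A : Matrix (Fin 2) (Fin 2) ℝ) (b : Fin 2 → ℝ) :
    ∑ i, enorm2 (x (i + 2) - x (i + 1)) *
        ∫ s in (0 : ℝ)..1, ρ (edgePt x i s) *ᵥ n i ⬝ᵥ (A *ᵥ edgePt x i s + b) =
      (∫ y in Tset x, matDiv ρ y ⬝ᵥ (A *ᵥ y + b)) + ∑ k, ∑ l, A k l * ∫ y in Tset x, ρ y k l := by
  have hv : ∀ k, ContDiff ℝ 1 fun y => (A *ᵥ y + b) k := fun k => by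
    simp only [Pi.add_apply, mulVec, dotProduct]
    fun_prop
  have hderiv : ∀ k l y, fderiv ℝ (fun z => (A *ᵥ z + b) k) y (Pi.single l 1) = A k l := by
    intro k l y
    have : (fun z => (A *ᵥ z + b) k) =
        fun z => (ContinuousLinearMap.proj k).comp (toLin' A).toContinuousLinearMap z + b k := rfl
    rw [this, fderiv_add_const, ContinuousLinearMap.fderiv]
    simp
  have hcont := continuous_matDiv hρ
  have hρint : ∀ k l, IntegrableOn (fun y => ρ y k l) (Tset x) :=
    fun k l => (hρ k l).continuous.continuousOn.integrableOn_compact (isCompact_Tset x)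
  rw [sum_edge_integral_mulVec_dotProduct hn hρ hv]
  simp_rw [hderiv]
  rw [integral_add, integral_finsetSum]
  · simp_rw [integral_finsetSum _ fun l _ => (hρint _ l).mul_const _, integral_mul_const,
      mul_comm]
  · exact fun k _ => integrable_finsetSum _ fun l _ => (hρint k l).mul_const _
  · exact (by fun_prop : Continuous _).continuousOn.integrableOn_compact (isCompact_Tset x)
  · exact integrable_finsetSum _ fun k _ =>
      integrable_finsetSum _ fun l _ => (hρint k l).mul_const _

end MatrixField

end TriangleGreen

lemma IsPolyDeg2.contDiff {f : (Fin 2 → ℝ) → ℝ} (hf : IsPolyDeg2 f) {m : WithTop ℕ∞} :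
    ContDiff ℝ m f := by
  obtain ⟨p, -, hp⟩ := hf
  rw [funext hp]
  exact (AnalyticOnNhd.eval_mvPolynomial p).contDiff

theorem interpolation_conserves_normal_moments
    (x n : Fin 3 → Fin 2 → ℝ)
    (hn : IsOuterNormal x n)
    (τ : (Fin 2 → ℝ) → Matrix (Fin 2) (Fin 2) ℝ)
    (hτreg : ∀ k l : Fin 2, ContDiff ℝ 1 fun y => τ y k l)
    (σ : (Fin 2 → ℝ) → Matrix (Fin 2) (Fin 2) ℝ)
    (hσ : MemXT x n σ)
    (hdof2 : ∀ k l : Fin 2, (∫ y in Tset x, σ y k l) = ∫ y in Tset x, τ y k l)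
    (hdof3 : ∀ (A : Matrix (Fin 2) (Fin 2) ℝ) (b : Fin 2 → ℝ),
      (∫ y in Tset x, matDiv σ y ⬝ᵥ (A.mulVec y + b)) =
      ∫ y in Tset x, matDiv τ y ⬝ᵥ (A.mulVec y + b)) :
    ∀ (A : Matrix (Fin 2) (Fin 2) ℝ) (b : Fin 2 → ℝ),
      (∑ i : Fin 3, enorm2 (x (i + 2) - x (i + 1)) *
        ∫ s in (0:ℝ)..1, (σ (edgePt x i s)).mulVec (n i) ⬝ᵥ (A.mulVec (edgePt x i s) + b)) =
      ∑ i : Fin 3, enorm2 (x (i + 2) - x (i + 1)) *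
        ∫ s in (0:ℝ)..1, (τ (edgePt x i s)).mulVec (n i) ⬝ᵥ (A.mulVec (edgePt x i s) + b) := by
  intro A b
  have hσreg : ∀ k l, ContDiff ℝ 1 fun y => σ y k l := fun k l => (hσ.2.1 k l).contDiff
  rw [TriangleGreen.sum_edge_integral_mulVec_dotProduct_affine hn hσreg,
    TriangleGreen.sum_edge_integral_mulVec_dotProduct_affine hn hτreg, hdof3]
  simp_rw [hdof2]
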